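/- Let G be a finite graph, w a normal weighting of G, and u, v ∈ V(G) distinct with N(u) ⊆ N[v]. Let G' = G - u and let w' be the weighting of G' agreeing with w except that w'(v) = w(u) + w(v). Then every w'-balanced separator S of G' with v ∉ S is a w-balanced separator of G. -/

import Mathlib

open SimpleGraph

variable {V : Type}

/-- `u` and `v` are connected by a walk in `G` avoiding `S`
(i.e., they lie in the same component of `G - S`). -/
def ReachOutside (G : SimpleGraph V) (S : Set V) (u v : V) : Prop :=
  ∃ p : G.Walk u v, ∀ x ∈ p.support, x ∉ S

/-- Total weight of a vertex set. -/
noncomputable def setWeight [Finite V] (w : V → ℝ) (A : Set V) : ℝ :=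
  ∑ v ∈ (Set.toFinite A).toFinset, w v

/-- `S` is a `w`-balanced separator of `G`: every component of `G - S`
has weight at most half the total weight. -/
def IsBalancedSep [Finite V] (G : SimpleGraph V) (w : V → ℝ) (S : Set V) : Prop :=
  ∀ v, v ∉ S → setWeight w {u | ReachOutside G S u v} ≤ setWeight w (Set.univ : Set V) / 2

/-- Closed neighbourhood `N[A]` of a vertex set. -/
def closedNbhd (G : SimpleGraph V) (A : Set V) : Set V :=
  A ∪ {x | ∃ a ∈ A, G.Adj a x}

/-- `S` separates `A` from `B` in `G`: every walk from `A` to `B` meets `S`. -/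
def Separates (G : SimpleGraph V) (S A B : Set V) : Prop :=
  ∀ a ∈ A, ∀ b ∈ B, ∀ p : G.Walk a b, ∃ x ∈ p.support, x ∈ S

/-- `C` is (the vertex set of) an induced cycle of `G`: the induced subgraph is
connected and every vertex of `C` has exactly two neighbours in `C`. -/
def IsInducedCycle (G : SimpleGraph V) (C : Set V) : Prop :=
  (G.induce C).Connected ∧ ∀ x ∈ C, (G.neighborSet x ∩ C).ncard = 2

/-- `H` is an induced minor of `G`. -/
def IsInducedMinor {W : Type} (H : SimpleGraph W) (G : SimpleGraph V) : Prop :=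
  ∃ X : W → Set V,
    (∀ a, (G.induce (X a)).Connected) ∧
    (Pairwise fun a b => Disjoint (X a) (X b)) ∧
    ∀ a b, a ≠ b → ((∃ u ∈ X a, ∃ v ∈ X b, G.Adj u v) ↔ H.Adj a b)

/-- `H` is a minor of `G`. -/
def IsMinor {W : Type} (H : SimpleGraph W) (G : SimpleGraph V) : Prop :=
  ∃ X : W → Set V,
    (∀ a, (G.induce (X a)).Connected) ∧
    (Pairwise fun a b => Disjoint (X a) (X b)) ∧
    ∀ a b, H.Adj a b → ∃ u ∈ X a, ∃ v ∈ X b, G.Adj u v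

/-- The `ℓ`-wheel: a cycle of length `ℓ` plus a universal vertex (`none`). -/
def wheel (ℓ : ℕ) : SimpleGraph (Option (ZMod ℓ)) :=
  SimpleGraph.fromRel fun a b =>
    a = none ∨ b = none ∨ ∃ i : ZMod ℓ, a = some i ∧ b = some (i + 1)

/-- The `ℓ`-fan: a path on `ℓ` vertices plus a universal vertex (`none`). -/
def fan (ℓ : ℕ) : SimpleGraph (Option (Fin ℓ)) :=
  SimpleGraph.fromRel fun a b =>
    a = none ∨ b = none ∨ ∃ i j : Fin ℓ, a = some i ∧ b = some j ∧ (j : ℕ) = (i : ℕ) + 1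

/-! Sending `u` to `v` maps `G` onto `G' = G - u`; as `N(u) ⊆ N[v]`, every edge at `u` becomes an
edge at `v` or collapses to `v`, so each component `C` of `G - S` lands inside one component `C'`
of `G' - S`. The weighting `w'` is the pushforward of `w` along this map, hence
`w(C) ≤ w(preimage of C') = w'(C') ≤ w'(V(G'))/2 = w(V(G))/2`. -/

namespace ReachOutside

variable {W : Type} {G : SimpleGraph V} {S : Set V}

lemma refl {a : V} (ha : a ∉ S) : ReachOutside G S a a :=
  ⟨.nil, by simpa using ha⟩

lemma trans {a b c : V} (hab : ReachOutside G S a b) (hbc : ReachOutside G S b c) :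
    ReachOutside G S a c := by
  obtain ⟨p, hp⟩ := hab
  obtain ⟨q, hq⟩ := hbc
  refine ⟨p.append q, fun x hx => ?_⟩
  rcases List.mem_append.mp (Walk.support_append p q ▸ hx) with hx | hx
  · exact hp x hx
  · exact hq x (List.mem_of_mem_tail hx)

lemma symm {a b : V} (hab : ReachOutside G S a b) : ReachOutside G S b a := by
  obtain ⟨p, hp⟩ := hab
  exact ⟨p.reverse, fun x hx => hp x (by simpa using hx)⟩

lemma of_adj {a b : V} (h : G.Adj a b) (ha : a ∉ S) (hb : b ∉ S) : ReachOutside G S a b :=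
  ⟨h.toWalk, by simp [ha, hb]⟩

lemma map {H : SimpleGraph W} {T : Set W} {f : V → W} (hfS : ∀ a, a ∉ S → f a ∉ T)
    (hf : ∀ a b, G.Adj a b → a ∉ S → b ∉ S → ReachOutside H T (f a) (f b))
    {a b : V} (hab : ReachOutside G S a b) : ReachOutside H T (f a) (f b) := by
  obtain ⟨p, hp⟩ := hab
  induction p with
  | nil => exact refl (hfS _ (hp _ (Walk.start_mem_support _)))
  | cons h p ih =>
    simp only [Walk.support_cons, List.mem_cons, forall_eq_or_imp] at hp
    exact (hf _ _ h hp.1 (hp.2 _ p.start_mem_support)).trans (ih hp.2)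

end ReachOutside

section Weight

variable {W : Type} [Finite V]

lemma setWeight_eq_sum_toFinset [Fintype V] (w : V → ℝ) (A : Set V) [Fintype A] :
    setWeight w A = ∑ x ∈ A.toFinset, w x := by
  rw [setWeight, Set.toFinite_toFinset]

lemma setWeight_mono {w : V → ℝ} (hw : ∀ x, 0 ≤ w x) {A B : Set V} (hAB : A ⊆ B) :
    setWeight w A ≤ setWeight w B :=
  Finset.sum_le_sum_of_subset_of_nonneg (Set.Finite.toFinset_subset_toFinset.mpr hAB)
    fun x _ _ => hw x

lemma setWeight_preimage [Finite W] (w : V → ℝ) (f : V → W) (A : Set W) :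
    setWeight w (f ⁻¹' A) = setWeight (fun y => setWeight w (f ⁻¹' {y})) A := by
  classical
  have := Fintype.ofFinite V
  have := Fintype.ofFinite W
  simp only [setWeight_eq_sum_toFinset]
  rw [← Finset.sum_fiberwise_of_maps_to (s := (f ⁻¹' A).toFinset) (t := A.toFinset) (g := f)
    (by simp)]
  refine Finset.sum_congr rfl fun y hy => Finset.sum_congr ?_ fun _ _ => rfl
  ext x
  simp_all

end Weight

section Merge

variable [DecidableEq V] {u v : V}

def mergeInto (hvu : v ≠ u) (x : V) : {x : V | x ≠ u} :=
  if h : x = u then ⟨v, hvu⟩ else ⟨x, h⟩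

lemma mergeInto_of_ne (hvu : v ≠ u) {x : V} (hx : x ≠ u) : mergeInto hvu x = ⟨x, hx⟩ :=
  dif_neg hx

lemma mergeInto_self (hvu : v ≠ u) : mergeInto hvu u = ⟨v, hvu⟩ :=
  dif_pos rfl

lemma mergeInto_notMem_preimage {S : Set V} (hvu : v ≠ u) (hv : v ∉ S) {x : V} (hx : x ∉ S) :
    mergeInto hvu x ∉ Subtype.val ⁻¹' S := by
  unfold mergeInto
  split_ifs <;> assumption

lemma reachOutside_mergeInto_of_adj {G : SimpleGraph V} {S : Set V} (hvu : v ≠ u)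
    (hN : G.neighborSet u ⊆ insert v (G.neighborSet v)) (hv : v ∉ S) {a b : V}
    (hab : G.Adj a b) (ha : a ∉ S) (hb : b ∉ S) :
    ReachOutside (G.induce {x : V | x ≠ u}) (Subtype.val ⁻¹' S)
      (mergeInto hvu a) (mergeInto hvu b) := by
  have hv' : (⟨v, hvu⟩ : {x : V | x ≠ u}) ∉ Subtype.val ⁻¹' S := hv
  have from_u : ∀ c, G.Adj u c → c ∉ S →
      ReachOutside (G.induce {x : V | x ≠ u}) (Subtype.val ⁻¹' S)
        (mergeInto hvu u) (mergeInto hvu c) := by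
    intro c huc hc
    rw [mergeInto_self, mergeInto_of_ne hvu huc.ne.symm]
    rcases hN huc with rfl | hvc
    · exact .refl hv'
    · exact .of_adj hvc hv' hc
  by_cases hau : a = u
  · subst hau
    exact from_u b hab hb
  by_cases hbu : b = u
  · subst hbu
    exact (from_u a hab.symm ha).symm
  rw [mergeInto_of_ne hvu hau, mergeInto_of_ne hvu hbu]
  exact .of_adj hab ha hb

lemma setWeight_mergeInto_fiber [Finite V] (hvu : v ≠ u) (w : V → ℝ) (y : {x : V | x ≠ u}) :
    setWeight w (mergeInto hvu ⁻¹' {y}) = if (y : V) = v then w u + w v else w y := by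
  have := Fintype.ofFinite V
  split_ifs with hy
  · have hfiber : mergeInto hvu ⁻¹' {y} = {u, v} := by
      ext x
      by_cases hx : x = u <;> simp [mergeInto, hx, Subtype.ext_iff, hy]
    rw [hfiber, setWeight_eq_sum_toFinset]
    simp [Finset.sum_pair hvu.symm]
  · have hyu : (y : V) ≠ u := y.2
    have hfiber : mergeInto hvu ⁻¹' {y} = {(y : V)} := by
      ext x
      by_cases hx : x = u <;> simp [mergeInto, hx, Subtype.ext_iff, Ne.symm hy, Ne.symm hyu]
    rw [hfiber, setWeight_eq_sum_toFinset]
    simp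

end Merge

theorem identify_siblings_general [Finite V] [DecidableEq V] (G : SimpleGraph V)
    (w : V → ℝ) (hw0 : ∀ v, 0 ≤ w v)
    (u v : V) (huv : u ≠ v)
    (hN : G.neighborSet u ⊆ insert v (G.neighborSet v))
    (S : Set V) (hv : v ∉ S)
    (hS' : IsBalancedSep (G.induce {x : V | x ≠ u})
      (fun x => if (x : V) = v then w u + w v else w (x : V))
      (Subtype.val ⁻¹' S)) :
    IsBalancedSep G w S := by
  intro z hz
  have hvu : v ≠ u := huv.symm
  have hw' : (fun x : {x : V | x ≠ u} => if (x : V) = v then w u + w v else w (x : V)) =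
      fun y => setWeight w (mergeInto hvu ⁻¹' {y}) :=
    funext fun y => (setWeight_mergeInto_fiber hvu w y).symm
  have hcomp : {x | ReachOutside G S x z} ⊆ mergeInto hvu ⁻¹'
      {y | ReachOutside (G.induce {x : V | x ≠ u}) (Subtype.val ⁻¹' S) y (mergeInto hvu z)} :=
    fun _ hx => hx.map (fun _ => mergeInto_notMem_preimage hvu hv)
      (fun _ _ => reachOutside_mergeInto_of_adj hvu hN hv)
  calc setWeight w {x | ReachOutside G S x z}
      ≤ setWeight w (mergeInto hvu ⁻¹' _) := setWeight_mono hw0 hcomp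
    _ = setWeight _ _ := by rw [setWeight_preimage, hw']
    _ ≤ _ := hS' _ (mergeInto_notMem_preimage hvu hv hz)
    _ = setWeight w Set.univ / 2 := by rw [hw', ← setWeight_preimage, Set.preimage_univ]

/-- identifying a vertex with a dominated neighbourhood. -/
theorem identify_siblings [Finite V] [DecidableEq V] (G : SimpleGraph V)
    (w : V → ℝ) (hw0 : ∀ v, 0 ≤ w v) (hw1 : setWeight w (Set.univ : Set V) = 1)
    (u v : V) (huv : u ≠ v)
    (hN : G.neighborSet u ⊆ insert v (G.neighborSet v))
    (S : Set V) (hu : u ∉ S) (hv : v ∉ S)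
    (hS' : IsBalancedSep (G.induce {x : V | x ≠ u})
      (fun x => if (x : V) = v then w u + w v else w (x : V))
      (Subtype.val ⁻¹' S)) :
    IsBalancedSep G w S :=
  identify_siblings_general G w hw0 u v huv hN S hv hS'
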